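/- arXiv:1907.06681 — 3 statements merged into one kernel-verified Lean document; each statement's English description precedes it below -/
import Mathlib

section
/- f₄₂ = 356077960394850110410690594606123271850033152; in particular f₄₂ > 0 even though 42 mod 6 = 0, so n = 42 is the first index at which the apparent 6-periodic sign pattern of the sequence fₙ fails. -/
open Finset

/-! ## ℕ-indexed word machinery for peaks -/

def isPk (w : ℕ → ℕ) (n i : ℕ) : Prop :=
  1 ≤ i ∧ i + 1 < n ∧ w (i-1) < w i ∧ w (i+1) < w i

instance (w n i) : Decidable (isPk w n i) := by unfold isPk; infer_instance

def pkS (w : ℕ → ℕ) (n : ℕ) : Finset ℕ := (Finset.range n).filter (isPk w n)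

def pkf (w : ℕ → ℕ) (n : ℕ) : ℕ := (pkS w n).card

def insF (j x : ℕ) (w : ℕ → ℕ) : ℕ → ℕ :=
  fun i => if i < j then w i else if i = j then x else w (i-1)

lemma mem_pkS {w n i} : i ∈ pkS w n ↔ isPk w n i := by
  constructor
  · intro h; exact (Finset.mem_filter.1 h).2
  · intro h; exact Finset.mem_filter.2 ⟨Finset.mem_range.2 (by have := h.2.1; omega), h⟩


lemma insF_lt {j x w i} (h : i < j) : insF j x w i = w i := by simp [insF, h]

lemma insF_self {j x w} : insF j x w j = x := by simp [insF]

lemma insF_gt {j x w i} (h : j < i) : insF j x w i = w (i-1) := by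
  have h1 : ¬ i < j := by omega
  have h2 : ¬ i = j := by omega
  simp [insF, h1, h2]

lemma not_isPk_succ {w n p} (h : isPk w n p) : ¬ isPk w n (p+1) := by
  rintro ⟨-, -, h1, -⟩
  simp only [Nat.add_sub_cancel] at h1
  exact absurd h.2.2.2 (by omega)

/-- characterization of peaks after inserting a maximum `x` at slot `j`. -/
lemma isPk_insF {w : ℕ → ℕ} {n j x : ℕ} (hj : j ≤ n) (hx : ∀ i < n, w i < x) (i : ℕ) :
    isPk (insF j x w) (n+1) i ↔
      (isPk w n i ∧ i + 1 < j) ∨ (∃ p, isPk w n p ∧ j < p ∧ i = p + 1) ∨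
      (i = j ∧ 1 ≤ j ∧ j < n) := by
  constructor
  · rintro ⟨h1, h2, h3, h4⟩
    rcases Nat.lt_trichotomy i j with hij | hij | hij
    · rcases Nat.lt_or_ge (i+1) j with hij1 | hij1
      · -- i + 1 < j
        left
        rw [insF_lt (show i - 1 < j by omega), insF_lt hij] at h3
        rw [insF_lt hij1, insF_lt hij] at h4
        exact ⟨⟨h1, by omega, h3, h4⟩, hij1⟩
      · -- i + 1 = j : right neighbor is x, cannot be a peak
        have e2 : insF j x w (i+1) = x := by
          rw [show i + 1 = j by omega]; exact insF_self
        rw [e2, insF_lt hij] at h4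
        exact absurd (hx i (by omega)) (by omega)
    · subst hij
      exact Or.inr (Or.inr ⟨rfl, h1, by omega⟩)
    · rcases Nat.lt_or_ge (j+1) i with hij1 | hij1
      · -- i ≥ j + 2 : corresponds to old peak i - 1
        right; left
        rw [insF_gt (show j < i - 1 by omega), insF_gt hij] at h3
        rw [insF_gt (by omega), insF_gt hij] at h4
        refine ⟨i - 1, ⟨by omega, by omega, h3, ?_⟩, by omega, by omega⟩
        rw [show i - 1 + 1 = i + 1 - 1 by omega]
        exact h4
      · -- i = j + 1 : left neighbor is x
        have e1 : insF j x w (i-1) = x := by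
          rw [show i - 1 = j by omega]; exact insF_self
        rw [e1, insF_gt hij] at h3
        exact absurd (hx (i-1) (by omega)) (by omega)
  · rintro (⟨⟨h1, h2, h3, h4⟩, hij⟩ | ⟨p, ⟨h1, h2, h3, h4⟩, hp, rfl⟩ | ⟨rfl, h1, h2⟩)
    · exact ⟨h1, by omega, by rw [insF_lt (by omega), insF_lt (by omega)]; exact h3,
        by rw [insF_lt (by omega), insF_lt (by omega)]; exact h4⟩
    · refine ⟨by omega, by omega, ?_, ?_⟩
      · rw [insF_gt (by omega), insF_gt (by omega)]
        simpa using h3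
      · rw [insF_gt (by omega), insF_gt (by omega)]
        have : p + 1 + 1 - 1 = p + 1 := by omega
        rw [this]
        have : p + 1 - 1 = p := by omega
        rw [this]
        exact h4
    · refine ⟨h1, by omega, ?_, ?_⟩
      · rw [insF_self, insF_lt (by omega)]
        exact hx _ (by omega)
      · rw [insF_self, insF_gt (by omega)]
        have : i + 1 - 1 = i := by omega
        rw [this]
        exact hx _ (by omega)


/-- the slots at which inserting the max keeps the number of peaks unchanged -/
def sameSlots (w : ℕ → ℕ) (n : ℕ) : Finset ℕ :=
  (pkS w n ∪ (pkS w n).image (· + 1)) ∪ {0, n}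

lemma pkS_insF {w : ℕ → ℕ} {n j x : ℕ} (hj : j ≤ n) (hx : ∀ i < n, w i < x) :
    pkS (insF j x w) (n+1) =
      ((pkS w n).filter (fun p => p + 1 < j)) ∪
      (((pkS w n).filter (fun p => j < p)).image (· + 1)) ∪
      (if 1 ≤ j ∧ j < n then {j} else ∅) := by
  ext i
  rw [mem_pkS, isPk_insF hj hx]
  simp only [Finset.mem_union, Finset.mem_filter, Finset.mem_image, mem_pkS]
  constructor
  · rintro (⟨h, hlt⟩ | ⟨p, hp, hjp, rfl⟩ | ⟨rfl, h1, h2⟩)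
    · exact Or.inl (Or.inl ⟨h, hlt⟩)
    · exact Or.inl (Or.inr ⟨p, ⟨hp, hjp⟩, rfl⟩)
    · right; rw [if_pos ⟨h1, h2⟩]; exact Finset.mem_singleton_self _
  · rintro ((⟨h, hlt⟩ | ⟨p, ⟨hp, hjp⟩, rfl⟩) | hmem)
    · exact Or.inl ⟨h, hlt⟩
    · exact Or.inr (Or.inl ⟨p, hp, hjp, rfl⟩)
    · right; right
      by_cases hc : 1 ≤ j ∧ j < n
      · rw [if_pos hc, Finset.mem_singleton] at hmem
        exact ⟨hmem, hc⟩
      · rw [if_neg hc] at hmem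
        exact absurd hmem (Finset.notMem_empty _)

lemma pkf_insF {w : ℕ → ℕ} {n j x : ℕ} (hn : 1 ≤ n) (hj : j ≤ n)
    (hx : ∀ i < n, w i < x) :
    pkf (insF j x w) (n+1) =
      if j ∈ sameSlots w n then pkf w n else pkf w n + 1 := by
  classical
  have hAB : Disjoint ((pkS w n).filter (fun p => p + 1 < j))
      (((pkS w n).filter (fun p => j < p)).image (· + 1)) := by
    rw [Finset.disjoint_left]
    intro a ha hb
    simp only [Finset.mem_filter, Finset.mem_image] at ha hb
    obtain ⟨p, ⟨-, hp⟩, rfl⟩ := hb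
    omega
  have hC : Disjoint
      (((pkS w n).filter (fun p => p + 1 < j)) ∪
        (((pkS w n).filter (fun p => j < p)).image (· + 1)))
      ((if 1 ≤ j ∧ j < n then {j} else ∅ : Finset ℕ)) := by
    rw [Finset.disjoint_right]
    intro a ha hb
    by_cases hc : 1 ≤ j ∧ j < n
    · rw [if_pos hc, Finset.mem_singleton] at ha
      subst ha
      simp only [Finset.mem_union, Finset.mem_filter, Finset.mem_image] at hb
      rcases hb with ⟨-, h⟩ | ⟨p, ⟨-, hp⟩, h⟩ <;> omega
    · rw [if_neg hc] at ha; exact Finset.notMem_empty _ ha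
  have hcard : pkf (insF j x w) (n+1) =
      ((pkS w n).filter (fun p => p + 1 < j ∨ j < p)).card +
        (if 1 ≤ j ∧ j < n then 1 else 0) := by
    rw [pkf, pkS_insF hj hx, Finset.card_union_of_disjoint hC,
      Finset.card_union_of_disjoint hAB,
      Finset.card_image_of_injective _ (add_left_injective 1),
      Finset.filter_or,
      Finset.card_union_of_disjoint (by
        rw [Finset.disjoint_left]
        intro a ha hb
        simp only [Finset.mem_filter] at ha hb
        omega)]
    congr 1
    by_cases hc : 1 ≤ j ∧ j < n
    · rw [if_pos hc, if_pos hc, Finset.card_singleton]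
    · rw [if_neg hc, if_neg hc, Finset.card_empty]
  have hsplit : ((pkS w n).filter (fun p => p + 1 < j ∨ j < p)).card +
      ((pkS w n).filter (fun p => ¬(p + 1 < j ∨ j < p))).card = pkf w n := by
    rw [pkf]
    exact Finset.card_filter_add_card_filter_not _
  by_cases hs : j ∈ sameSlots w n
  · rw [if_pos hs]
    simp only [sameSlots, Finset.mem_union, Finset.mem_image, mem_pkS,
      Finset.mem_insert, Finset.mem_singleton] at hs
    rcases hs with (hjp | ⟨p, hp, rfl⟩) | (hj0 | hjn)
    · -- j itself is a peak
      have hD : ((pkS w n).filter (fun p => ¬(p + 1 < j ∨ j < p))) = {j} := by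
        ext q
        simp only [Finset.mem_filter, Finset.mem_singleton, mem_pkS]
        constructor
        · rintro ⟨hq, hq2⟩
          by_contra hne
          have hq1 : q + 1 = j := by
            have := hq.1; omega
          exact not_isPk_succ hq (hq1 ▸ hjp)
        · rintro rfl
          exact ⟨hjp, by omega⟩
      rw [hD] at hsplit
      rw [hcard, if_pos ⟨hjp.1, by have := hjp.2.1; omega⟩]
      simp only [Finset.card_singleton] at hsplit
      omega
    · -- j = p + 1 for a peak p
      have hD : ((pkS w n).filter (fun q => ¬(q + 1 < p + 1 ∨ p + 1 < q))) = {p} := by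
        ext q
        simp only [Finset.mem_filter, Finset.mem_singleton, mem_pkS]
        constructor
        · rintro ⟨hq, hq2⟩
          by_contra hne
          have hq1 : q = p + 1 := by omega
          exact not_isPk_succ hp (hq1 ▸ hq)
        · rintro rfl
          exact ⟨hp, by omega⟩
      rw [hD] at hsplit
      rw [hcard, if_pos ⟨by omega, by have := hp.2.1; omega⟩]
      simp only [Finset.card_singleton] at hsplit
      omega
    · -- j = 0
      have hD : ((pkS w n).filter (fun p => ¬(p + 1 < j ∨ j < p))) = ∅ := by
        rw [Finset.filter_eq_empty_iff]
        intro q hq hcon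
        have := (mem_pkS.1 hq).1
        omega
      rw [hD] at hsplit
      rw [hcard, if_neg (by omega)]
      simp only [Finset.card_empty] at hsplit
      omega
    · -- j = n
      have hD : ((pkS w n).filter (fun p => ¬(p + 1 < j ∨ j < p))) = ∅ := by
        rw [Finset.filter_eq_empty_iff]
        intro q hq hcon
        have := (mem_pkS.1 hq).2.1
        omega
      rw [hD] at hsplit
      rw [hcard, if_neg (by omega)]
      simp only [Finset.card_empty] at hsplit
      omega
  · rw [if_neg hs]
    have hs' := hs
    simp only [sameSlots, Finset.mem_union, Finset.mem_image, mem_pkS,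
      Finset.mem_insert, Finset.mem_singleton, not_or] at hs'
    obtain ⟨⟨hs1, hs2⟩, hs3, hs4⟩ := hs'
    have hD : ((pkS w n).filter (fun p => ¬(p + 1 < j ∨ j < p))) = ∅ := by
      rw [Finset.filter_eq_empty_iff]
      intro q hq hcon
      have hq' := mem_pkS.1 hq
      have : q = j ∨ q + 1 = j := by omega
      rcases this with rfl | hqe
      · exact hs1 hq'
      · exact hs2 ⟨q, hq', hqe⟩
    rw [hD] at hsplit
    rw [hcard, if_pos ⟨by omega, by omega⟩]
    simp only [Finset.card_empty] at hsplit
    omega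


lemma sameSlots_subset {w : ℕ → ℕ} {n : ℕ} : sameSlots w n ⊆ Finset.range (n+1) := by
  intro a ha
  simp only [sameSlots, Finset.mem_union, Finset.mem_image, mem_pkS,
    Finset.mem_insert, Finset.mem_singleton] at ha
  rw [Finset.mem_range]
  rcases ha with (h | ⟨p, hp, rfl⟩) | (rfl | rfl)
  · have := h.2.1; omega
  · have := hp.2.1; omega
  · omega
  · omega

lemma card_sameSlots {w : ℕ → ℕ} {n : ℕ} (hn : 1 ≤ n) :
    (sameSlots w n).card = 2 * pkf w n + 2 := by
  have h1 : Disjoint (pkS w n) ((pkS w n).image (· + 1)) := by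
    rw [Finset.disjoint_left]
    intro a ha hb
    simp only [Finset.mem_image] at hb
    obtain ⟨p, hp, rfl⟩ := hb
    exact not_isPk_succ (mem_pkS.1 hp) (mem_pkS.1 ha)
  have h2 : Disjoint (pkS w n ∪ (pkS w n).image (· + 1)) ({0, n} : Finset ℕ) := by
    rw [Finset.disjoint_left]
    intro a ha hb
    simp only [Finset.mem_insert, Finset.mem_singleton] at hb
    simp only [Finset.mem_union, Finset.mem_image, mem_pkS] at ha
    rcases ha with h | ⟨p, hp, rfl⟩
    · have := h.1; have := h.2.1; omega
    · have := hp.2.1; omega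
  rw [sameSlots, Finset.card_union_of_disjoint h2, Finset.card_union_of_disjoint h1,
    Finset.card_image_of_injective _ (add_left_injective 1)]
  rw [show ({0, n} : Finset ℕ).card = 2 by
    rw [Finset.card_insert_of_notMem (by simp; omega), Finset.card_singleton]]
  rw [pkf]; ring

lemma count_insert {w : ℕ → ℕ} {n x : ℕ} (hn : 1 ≤ n) (hx : ∀ i < n, w i < x)
    (k' : ℕ) :
    ((Finset.range (n+1)).filter (fun j => pkf (insF j x w) (n+1) = k')).card =
      if k' = pkf w n then 2 * pkf w n + 2
      else if k' = pkf w n + 1 then n - 1 - 2 * pkf w n else 0 := by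
  have key : ∀ j ≤ n, pkf (insF j x w) (n+1) =
      if j ∈ sameSlots w n then pkf w n else pkf w n + 1 :=
    fun j hj => pkf_insF hn hj hx
  by_cases h1 : k' = pkf w n
  · rw [if_pos h1]
    have : (Finset.range (n+1)).filter (fun j => pkf (insF j x w) (n+1) = k') =
        sameSlots w n := by
      ext j
      simp only [Finset.mem_filter, Finset.mem_range]
      constructor
      · rintro ⟨hjr, hje⟩
        by_contra hns
        rw [key j (by omega), if_neg hns] at hje
        omega
      · intro hj
        have hjr := Finset.mem_range.1 (sameSlots_subset hj)
        exact ⟨hjr, by rw [key j (by omega), if_pos hj, h1]⟩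
    rw [this, card_sameSlots hn]
  · rw [if_neg h1]
    by_cases h2 : k' = pkf w n + 1
    · rw [if_pos h2]
      have : (Finset.range (n+1)).filter (fun j => pkf (insF j x w) (n+1) = k') =
          Finset.range (n+1) \ sameSlots w n := by
        ext j
        simp only [Finset.mem_filter, Finset.mem_range, Finset.mem_sdiff]
        constructor
        · rintro ⟨hjr, hje⟩
          refine ⟨hjr, fun hs => ?_⟩
          rw [key j (by omega), if_pos hs] at hje
          omega
        · rintro ⟨hjr, hns⟩
          exact ⟨hjr, by rw [key j (by omega), if_neg hns, h2]⟩
      rw [this, Finset.card_sdiff_of_subset sameSlots_subset, card_sameSlots hn,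
        Finset.card_range]
      omega
    · rw [if_neg h2]
      rw [Finset.card_eq_zero, Finset.filter_eq_empty_iff]
      intro j hj
      rw [Finset.mem_range] at hj
      rw [key j (by omega)]
      by_cases hs : j ∈ sameSlots w n
      · rw [if_pos hs]; omega
      · rw [if_neg hs]; omega


open scoped Classical in
/-- The number of peaks of a permutation of `Fin n` (0-indexed: a peak is an
index `i` with `1 ≤ i ≤ n-2` such that `π (i-1) < π i > π (i+1)`;
this matches the 1-indexed condition `2 ≤ i ≤ n-1` of the paper). -/
noncomputable def numPeaks {n : ℕ} (π : Equiv.Perm (Fin n)) : ℕ :=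
  (Finset.univ.filter fun i : Fin n =>
    ∃ (_ : 1 ≤ (i : ℕ)) (h2 : (i : ℕ) + 1 < n),
      π ⟨(i : ℕ) - 1, Nat.lt_of_le_of_lt (Nat.sub_le _ _) i.isLt⟩ < π i ∧
      π ⟨(i : ℕ) + 1, h2⟩ < π i).card

/-- The peak polynomial `Pₙ(t) = ∑_{π ∈ Sₙ} t^(pk π)`, evaluated at `t : ℝ`. -/
noncomputable def peakPoly (n : ℕ) (t : ℝ) : ℝ :=
  ∑ π : Equiv.Perm (Fin n), t ^ numPeaks π

/-- `fₙ = Pₙ(-1)`. -/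
noncomputable def f (n : ℕ) : ℝ := peakPoly n (-1)

/-! ## Relating `numPeaks` to the word machinery -/

def wd {n : ℕ} (π : Equiv.Perm (Fin n)) : ℕ → ℕ :=
  fun i => if h : i < n then (π ⟨i, h⟩ : ℕ) else 0

lemma wd_eq {n : ℕ} (π : Equiv.Perm (Fin n)) {i : ℕ} (h : i < n) :
    wd π i = (π ⟨i, h⟩ : ℕ) := dif_pos h

lemma wd_lt {n : ℕ} (π : Equiv.Perm (Fin n)) : ∀ i < n, wd π i < n := by
  intro i h
  rw [wd_eq π h]
  exact (π ⟨i, h⟩).isLt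

lemma numPeaks_eq_pkf {n : ℕ} (π : Equiv.Perm (Fin n)) :
    numPeaks π = pkf (wd π) n := by
  classical
  rw [numPeaks, pkf, pkS]
  refine Finset.card_bij (fun a _ => (a : ℕ)) ?_ ?_ ?_
  · intro a ha
    simp only [Finset.mem_filter, Finset.mem_univ, true_and] at ha
    obtain ⟨h1, h2, h3, h4⟩ := ha
    show (a : ℕ) ∈ (Finset.range n).filter (isPk (wd π) n)
    refine Finset.mem_filter.2 ⟨Finset.mem_range.2 (by omega), h1, h2, ?_, ?_⟩
    · rw [wd_eq π (show (a:ℕ)-1 < n by omega), wd_eq π (show (a:ℕ) < n from a.isLt)]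
      rw [show (⟨(a:ℕ), a.isLt⟩ : Fin n) = a from rfl] at *
      exact h3
    · rw [wd_eq π (show (a:ℕ)+1 < n from h2), wd_eq π (show (a:ℕ) < n from a.isLt)]
      rw [show (⟨(a:ℕ), a.isLt⟩ : Fin n) = a from rfl] at *
      exact h4
  · intro a _ b _ h
    exact Fin.val_injective h
  · intro b hb
    rw [Finset.mem_filter, Finset.mem_range] at hb
    obtain ⟨hbn, h1, h2, h3, h4⟩ := hb
    refine ⟨⟨b, hbn⟩, Finset.mem_filter.2 ⟨Finset.mem_univ _, h1, h2, ?_, ?_⟩, rfl⟩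
    · rw [wd_eq π (show b-1 < n by omega), wd_eq π hbn] at h3
      exact h3
    · rw [wd_eq π h2, wd_eq π hbn] at h4
      exact h4

/-! ## Inserting the maximum into a permutation -/

def insPerm {n : ℕ} (j : Fin (n+1)) (σ : Equiv.Perm (Fin n)) : Equiv.Perm (Fin (n+1)) :=
  (finSuccEquiv' j).trans ((Equiv.optionCongr σ).trans (finSuccEquiv' (Fin.last n)).symm)

lemma insPerm_apply_self {n : ℕ} (j : Fin (n+1)) (σ : Equiv.Perm (Fin n)) :
    insPerm j σ j = Fin.last n := by
  simp [insPerm, finSuccEquiv'_at]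

lemma insPerm_apply_succAbove {n : ℕ} (j : Fin (n+1)) (σ : Equiv.Perm (Fin n)) (m : Fin n) :
    insPerm j σ (j.succAbove m) = (σ m).castSucc := by
  simp [insPerm, finSuccEquiv'_succAbove, finSuccEquiv'_symm_some, Fin.succAbove_last]

lemma insPerm_injective {n : ℕ} :
    Function.Injective (fun p : Fin (n+1) × Equiv.Perm (Fin n) => insPerm p.1 p.2) := by
  rintro ⟨j, σ⟩ ⟨j', σ'⟩ h
  simp only at h
  have hj : j = j' := by
    by_contra hne
    obtain ⟨m, hm⟩ := Fin.exists_succAbove_eq hne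
    have h1 : insPerm j σ j = Fin.last n := insPerm_apply_self j σ
    rw [h, ← hm, insPerm_apply_succAbove] at h1
    exact absurd h1 (Fin.castSucc_lt_last _).ne
  subst hj
  have hσ : σ = σ' := by
    apply Equiv.ext
    intro m
    have h2 := congrArg (fun e => e (j.succAbove m)) h
    simp only [insPerm_apply_succAbove] at h2
    exact Fin.castSucc_injective n h2
  rw [hσ]

lemma insPerm_bijective {n : ℕ} :
    Function.Bijective (fun p : Fin (n+1) × Equiv.Perm (Fin n) => insPerm p.1 p.2) := by
  rw [Fintype.bijective_iff_injective_and_card]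
  refine ⟨insPerm_injective, ?_⟩
  simp [Fintype.card_perm, Nat.factorial_succ]

lemma wd_insPerm {n : ℕ} (j : Fin (n+1)) (σ : Equiv.Perm (Fin n)) :
    wd (insPerm j σ) = insF (j : ℕ) n (wd σ) := by
  funext i
  by_cases hi : i < n + 1
  · rcases Nat.lt_trichotomy i (j : ℕ) with hij | hij | hij
    · have hin : i < n := by have := j.isLt; omega
      rw [insF_lt hij, wd_eq _ hi, wd_eq _ hin]
      have : (⟨i, hi⟩ : Fin (n+1)) = j.succAbove ⟨i, hin⟩ := by
        rw [Fin.succAbove_of_castSucc_lt]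
        · rfl
        · rw [Fin.lt_def]; exact hij
      rw [this, insPerm_apply_succAbove]
      rfl
    · have : (⟨i, hi⟩ : Fin (n+1)) = j := by
        ext; exact hij
      rw [wd_eq _ hi, this, insPerm_apply_self]
      rw [show i = (j:ℕ) from hij, insF_self]
      rfl
    · have hin : i - 1 < n := by omega
      rw [insF_gt hij, wd_eq _ hi, wd_eq _ hin]
      have : (⟨i, hi⟩ : Fin (n+1)) = j.succAbove ⟨i - 1, hin⟩ := by
        rw [Fin.succAbove_of_le_castSucc]
        · ext; simp [Fin.succ]; omega
        · rw [Fin.le_def]; simp; omega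
      rw [this, insPerm_apply_succAbove]
      rfl
  · have h1 : wd (insPerm j σ) i = 0 := dif_neg hi
    have h2 : insF (j:ℕ) n (wd σ) i = 0 := by
      rw [insF_gt (by have := j.isLt; omega)]
      exact dif_neg (by omega)
    rw [h1, h2]

/-! ## The fiber cardinalities: W numbers -/

open scoped Classical in
noncomputable def Wp (n k : ℕ) : ℕ :=
  (Finset.univ.filter fun π : Equiv.Perm (Fin n) => numPeaks π = k).card

lemma numPeaks_fin_one (π : Equiv.Perm (Fin 1)) : numPeaks π = 0 := by
  classical
  rw [numPeaks, Finset.card_eq_zero, Finset.filter_eq_empty_iff]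
  rintro i -
  rintro ⟨h1, -⟩
  have := i.isLt
  omega

lemma Wp_one (k : ℕ) : Wp 1 k = if k = 0 then 1 else 0 := by
  classical
  rw [Wp]
  by_cases hk : k = 0
  · subst hk
    rw [if_pos rfl]
    rw [Finset.filter_true_of_mem (fun π _ => numPeaks_fin_one π)]
    simp
  · rw [if_neg hk, Finset.card_eq_zero, Finset.filter_eq_empty_iff]
    intro π _
    rw [numPeaks_fin_one π]
    omega

lemma numPeaks_le {n : ℕ} (π : Equiv.Perm (Fin n)) : numPeaks π ≤ n := by
  rw [numPeaks_eq_pkf]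
  calc pkf (wd π) n ≤ (Finset.range n).card := Finset.card_filter_le _ _
  _ = n := Finset.card_range n

lemma Wp_eq_zero {n k : ℕ} (h : n < k) : Wp n k = 0 := by
  classical
  rw [Wp, Finset.card_eq_zero, Finset.filter_eq_empty_iff]
  intro π _
  have := numPeaks_le π
  omega

lemma card_filter_fin (m : ℕ) (Q : ℕ → Prop) [DecidablePred Q] :
    (Finset.univ.filter fun j : Fin m => Q (j : ℕ)).card =
      ((Finset.range m).filter Q).card := by
  refine Finset.card_bij (fun a _ => (a : ℕ)) ?_ ?_ ?_
  · intro a ha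
    show (a : ℕ) ∈ (Finset.range m).filter Q
    rw [Finset.mem_filter] at ha ⊢
    exact ⟨Finset.mem_range.2 a.isLt, ha.2⟩
  · intro a _ b _ h
    exact Fin.val_injective h
  · intro b hb
    rw [Finset.mem_filter, Finset.mem_range] at hb
    exact ⟨⟨b, hb.1⟩, Finset.mem_filter.2 ⟨Finset.mem_univ _, hb.2⟩, rfl⟩


set_option maxHeartbeats 1000000 in
lemma Wp_succ {n : ℕ} (hn : 1 ≤ n) (k : ℕ) :
    Wp (n+1) k = (2*k+2) * Wp n k +
      (if k = 0 then 0 else (n+1-2*k) * Wp n (k-1)) := by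
  classical
  have step1 : Wp (n+1) k =
      ∑ p : Fin (n+1) × Equiv.Perm (Fin n),
        if numPeaks (insPerm p.1 p.2) = k then 1 else 0 := by
    rw [Wp, Finset.card_filter]
    exact (Fintype.sum_bijective _ insPerm_bijective _ _ (fun _ => rfl)).symm
  rw [step1, Fintype.sum_prod_type_right]
  have step2 : ∀ σ : Equiv.Perm (Fin n),
      (∑ j : Fin (n+1), if numPeaks (insPerm j σ) = k then 1 else 0) =
        if k = numPeaks σ then 2 * numPeaks σ + 2
        else if k = numPeaks σ + 1 then n - 1 - 2 * numPeaks σ else 0 := by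
    intro σ
    have h1 : ∀ j : Fin (n+1),
        numPeaks (insPerm j σ) = pkf (insF (j : ℕ) n (wd σ)) (n+1) := by
      intro j
      rw [numPeaks_eq_pkf, wd_insPerm]
    calc (∑ j : Fin (n+1), if numPeaks (insPerm j σ) = k then 1 else 0)
        = (Finset.univ.filter fun j : Fin (n+1) =>
            numPeaks (insPerm j σ) = k).card := (Finset.card_filter _ _).symm
      _ = (Finset.univ.filter fun j : Fin (n+1) =>
            pkf (insF (j : ℕ) n (wd σ)) (n+1) = k).card := by
          congr 1
          apply Finset.filter_congr
          intro j _
          rw [h1 j]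
      _ = ((Finset.range (n+1)).filter
            (fun jv => pkf (insF jv n (wd σ)) (n+1) = k)).card :=
          card_filter_fin (n+1) (fun jv => pkf (insF jv n (wd σ)) (n+1) = k)
      _ = _ := by
          rw [count_insert hn (wd_lt σ) k, numPeaks_eq_pkf σ]
  rw [Finset.sum_congr rfl fun σ _ => step2 σ]
  have step3 : ∀ σ : Equiv.Perm (Fin n),
      (if k = numPeaks σ then 2 * numPeaks σ + 2
        else if k = numPeaks σ + 1 then n - 1 - 2 * numPeaks σ else 0) =
      (if numPeaks σ = k then 2*k+2 else 0) +
        (if ¬ k = 0 ∧ numPeaks σ = k - 1 then n+1-2*k else 0) := by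
    intro σ
    split_ifs <;> omega
  rw [Finset.sum_congr rfl fun σ _ => step3 σ, Finset.sum_add_distrib]
  congr 1
  · rw [← Finset.sum_filter, Finset.sum_const, smul_eq_mul, Wp]
    ring
  · by_cases hk : k = 0
    · subst hk
      rw [if_pos rfl]
      refine Finset.sum_eq_zero fun σ _ => ?_
      rw [if_neg (by omega)]
    · rw [if_neg hk]
      have heq : ∀ σ : Equiv.Perm (Fin n),
          (if ¬ k = 0 ∧ numPeaks σ = k - 1 then n+1-2*k else 0) =
          (if numPeaks σ = k - 1 then n+1-2*k else 0) := by
        intro σ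
        by_cases h : numPeaks σ = k - 1
        · rw [if_pos ⟨hk, h⟩, if_pos h]
        · rw [if_neg (by tauto), if_neg h]
      rw [Finset.sum_congr rfl fun σ _ => heq σ, ← Finset.sum_filter,
        Finset.sum_const, smul_eq_mul, Wp]
      ring

/-! ## The computable DP for the W numbers -/

def stepL (m : ℕ) (r : List ℕ) : List ℕ :=
  (List.range (m+2)).map fun k =>
    (2*k+2) * r.getD k 0 + (if k = 0 then 0 else (m+1-2*k) * r.getD (k-1) 0)

def row : ℕ → List ℕ
  | 0 => [1]
  | 1 => [1, 0]
  | (n+2) => stepL (n+1) (row (n+1))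

lemma stepL_length (m : ℕ) (r : List ℕ) : (stepL m r).length = m + 2 := by
  simp [stepL]

lemma row_length : ∀ n, (row n).length = n + 1
  | 0 => rfl
  | 1 => rfl
  | (n+2) => by rw [row, stepL_length]

lemma Wp_row : ∀ n, 1 ≤ n → ∀ k, Wp n k = (row n).getD k 0 := by
  intro n
  induction n with
  | zero => omega
  | succ m ih =>
    intro _ k
    by_cases hm : m = 0
    · subst hm
      rcases k with _ | _ | k <;> simp [Wp_one, row]
    · have hm1 : 1 ≤ m := by omega
      have hrow : row (m+1) = stepL m (row m) := by
        obtain ⟨p, rfl⟩ : ∃ p, m = p + 1 := ⟨m - 1, by omega⟩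
        rfl
      rw [Wp_succ hm1 k, hrow]
      by_cases hk : k < m + 2
      · rw [List.getD_eq_getElem _ _ (by rw [stepL_length]; omega)]
        have : (stepL m (row m))[k]'(by rw [stepL_length]; omega) =
            (2*k+2) * (row m).getD k 0 +
              (if k = 0 then 0 else (m+1-2*k) * (row m).getD (k-1) 0) := by
          simp only [stepL, List.getElem_map, List.getElem_range]
        rw [this, ih hm1 k]
        by_cases hk0 : k = 0
        · rw [if_pos hk0, if_pos hk0]
        · rw [if_neg hk0, if_neg hk0, ih hm1 (k-1)]
      · rw [List.getD_eq_default _ _ (by rw [stepL_length]; omega)]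
        have h1 : Wp m k = 0 := Wp_eq_zero (by omega)
        have h2 : Wp m (k-1) = 0 := Wp_eq_zero (by omega)
        rw [h1, h2]
        by_cases hk0 : k = 0
        · omega
        · rw [if_neg hk0]; ring

/-! ## Alternating sums -/

def alt : List ℕ → ℤ
  | [] => 0
  | a :: t => (a : ℤ) - alt t

def galt (n : ℕ) : ℤ := alt (row n)

lemma sum_eq_alt (l : List ℕ) :
    (∑ k ∈ Finset.range l.length, (-1:ℤ)^k * l.getD k 0) = alt l := by
  induction l with
  | nil => simp [alt]
  | cons a t ih =>
    rw [List.length_cons, Finset.sum_range_succ']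
    have h1 : ∀ k, (-1:ℤ)^(k+1) * (a :: t).getD (k+1) 0 =
        -((-1:ℤ)^k * t.getD k 0) := by
      intro k
      rw [pow_succ]
      simp [List.getD]
    rw [Finset.sum_congr rfl fun k _ => h1 k, Finset.sum_neg_distrib, ih]
    simp [alt]
    ring

lemma f_eq_galt {n : ℕ} (hn : 1 ≤ n) : f n = (galt n : ℝ) := by
  classical
  have h1 : f n = ∑ π : Equiv.Perm (Fin n), (-1:ℝ) ^ numPeaks π := rfl
  have h2 : ∑ π : Equiv.Perm (Fin n), (-1:ℝ) ^ numPeaks π =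
      ∑ k ∈ Finset.range (n+1), ∑ π ∈ (Finset.univ.filter
        fun π : Equiv.Perm (Fin n) => numPeaks π = k), (-1:ℝ) ^ numPeaks π := by
    rw [Finset.sum_fiberwise_of_maps_to]
    intro π _
    rw [Finset.mem_range]
    have := numPeaks_le π
    omega
  have h3 : ∀ k ∈ Finset.range (n+1), ∑ π ∈ (Finset.univ.filter
        fun π : Equiv.Perm (Fin n) => numPeaks π = k), (-1:ℝ) ^ numPeaks π =
      (Wp n k : ℝ) * (-1:ℝ)^k := by
    intro k _
    rw [Finset.sum_congr rfl (fun π hπ => by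
      rw [(Finset.mem_filter.1 hπ).2]), Finset.sum_const, Wp]
    simp [mul_comm]
  rw [h1, h2, Finset.sum_congr rfl h3]
  have h4 : (galt n : ℝ) = ∑ k ∈ Finset.range (n+1), ((-1:ℤ)^k * (row n).getD k 0 : ℤ) := by
    rw [galt, ← sum_eq_alt, row_length]
  rw [h4]
  push_cast
  refine Finset.sum_congr rfl fun k _ => ?_
  rw [Wp_row n hn k]
  ring

set_option maxRecDepth 100000 in
lemma galt_42 : galt 42 = 356077960394850110410690594606123271850033152 := by decide

set_option maxRecDepth 100000 in
lemma galt_signs : ∀ n < 42, 1 ≤ n →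
    ((n % 6 = 1 ∨ n % 6 = 2 ∨ n % 6 = 3) → 0 < galt n) ∧
    ((n % 6 = 4 ∨ n % 6 = 5 ∨ n % 6 = 0) → galt n < 0) := by decide

/-- `f₄₂ = 356077960394850110410690594606123271850033152`; in particular `f₄₂ > 0`
even though `42 % 6 = 0`, so `n = 42` is the first index at which the apparent
6-periodic sign pattern (`fₙ > 0` when `n % 6 ∈ {1,2,3}`, `fₙ < 0` when
`n % 6 ∈ {4,5,0}`) fails. -/
theorem f_42_breaks_pattern :
    f 42 = 356077960394850110410690594606123271850033152 ∧
    0 < f 42 ∧ 42 % 6 = 0 ∧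
    (∀ n : ℕ, 1 ≤ n → n < 42 →
      ((n % 6 = 1 ∨ n % 6 = 2 ∨ n % 6 = 3) → 0 < f n) ∧
      ((n % 6 = 4 ∨ n % 6 = 5 ∨ n % 6 = 0) → f n < 0)) ∧
    ¬ (((42 % 6 = 1 ∨ 42 % 6 = 2 ∨ 42 % 6 = 3) → 0 < f 42) ∧
       ((42 % 6 = 4 ∨ 42 % 6 = 5 ∨ 42 % 6 = 0) → f 42 < 0)) := by
  have h42 : f 42 = 356077960394850110410690594606123271850033152 := by
    rw [f_eq_galt (by norm_num), galt_42]
    norm_num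
  have hpos : 0 < f 42 := by rw [h42]; positivity
  refine ⟨h42, hpos, by norm_num, ?_, ?_⟩
  · intro n h1 h2
    have := galt_signs n h2 h1
    constructor
    · intro h
      rw [f_eq_galt h1]
      exact_mod_cast this.1 h
    · intro h
      rw [f_eq_galt h1]
      exact_mod_cast this.2 h
  · rintro ⟨-, hneg⟩
    have : f 42 < 0 := hneg (by norm_num)
    linarith
end

section
/- For a complex number z at which cosh(z√2) ≠ 0, the equation tanh(z·√2) = √2 holds if and only if z = (log(3+2√2) + (2k+1)πi) / (2√2) for some integer k. -/
/-- For a complex `z` with `cosh(z√2) ≠ 0`, `tanh(z√2) = √2` holds iff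
`z = (log(3+2√2) + (2k+1)πi) / (2√2)` for some integer `k`. -/
theorem tanh_eq_sqrt_two_iff (z : ℂ) (hz : Complex.cosh (z * Real.sqrt 2) ≠ 0) :
    Complex.tanh (z * Real.sqrt 2) = (Real.sqrt 2 : ℂ) ↔
      ∃ k : ℤ, z = ((Real.log (3 + 2 * Real.sqrt 2) : ℂ) +
        (2 * (k : ℂ) + 1) * (Real.pi : ℂ) * Complex.I) / (2 * (Real.sqrt 2 : ℂ)) := by
  set s : ℂ := (Real.sqrt 2 : ℂ) with hsdef
  have hs : s ^ 2 = 2 := by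
    rw [hsdef]
    norm_cast
    rw [Real.sq_sqrt] <;> norm_num
  have hs0 : s ≠ 0 := by
    intro h; rw [h] at hs; norm_num at hs
  set w := z * s with hw
  have hA : Complex.exp w ≠ 0 := Complex.exp_ne_zero w
  have h1s : (1 : ℂ) - s ≠ 0 := by
    intro h
    have : s = 1 := by linear_combination -h
    rw [this] at hs; norm_num at hs
  have key : Complex.tanh w = s ↔ Complex.exp (2 * w) = -(3 + 2 * s) := by
    rw [Complex.tanh_eq_sinh_div_cosh, div_eq_iff hz, Complex.sinh, Complex.cosh,
      Complex.exp_neg, two_mul, Complex.exp_add]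
    constructor
    · intro h
      have h2 : (1 - s) * (Complex.exp w * Complex.exp w + (3 + 2 * s)) = 0 := by
        field_simp at h
        linear_combination h - 2 * hs
      rcases mul_eq_zero.1 h2 with h3 | h3
      · exact absurd h3 h1s
      · linear_combination h3
    · intro h
      field_simp
      linear_combination (1 - s) * h + 2 * hs
  rw [key]
  have hpos : (0 : ℝ) < 3 + 2 * Real.sqrt 2 := by positivity
  have hc : Complex.exp ((Real.log (3 + 2 * Real.sqrt 2) : ℂ) + Real.pi * Complex.I)
      = -(3 + 2 * s) := by
    rw [Complex.exp_add, Complex.exp_pi_mul_I, ← Complex.ofReal_exp, Real.exp_log hpos]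
    push_cast [hsdef]
    ring
  rw [← hc, Complex.exp_eq_exp_iff_exists_int]
  constructor
  · rintro ⟨n, hn⟩
    refine ⟨n, ?_⟩
    rw [eq_div_iff (by simp [hs0])]
    have : 2 * w = 2 * (z * s) := by rw [hw]
    push_cast at hn ⊢
    linear_combination hn
  · rintro ⟨n, hn⟩
    refine ⟨n, ?_⟩
    rw [eq_div_iff (by simp [hs0])] at hn
    push_cast at hn ⊢
    linear_combination hn
end

section
/- θ ≠ π/3; equivalently, √3 · log(3+2√2) ≠ π. Moreover θ > π/3 (numerically θ ≈ 1.012 · π/3). -/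
lemma key : Real.sqrt 3 * Real.log (3 + 2 * Real.sqrt 2) < Real.pi := by
  have h2 : Real.sqrt 2 < 1.41422 := by
    rw [show (1.41422:ℝ) = Real.sqrt (1.41422^2) from (Real.sqrt_sq (by norm_num)).symm]
    exact Real.sqrt_lt_sqrt (by norm_num) (by norm_num)
  have h3 : Real.sqrt 3 < 1.7321 := by
    rw [show (1.7321:ℝ) = Real.sqrt (1.7321^2) from (Real.sqrt_sq (by norm_num)).symm]
    exact Real.sqrt_lt_sqrt (by norm_num) (by norm_num)
  have hs3 : (0:ℝ) ≤ Real.sqrt 3 := Real.sqrt_nonneg 3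
  have hexp : (5.82844:ℝ) < Real.exp (16/9) := by
    have h9 : (5.82844:ℝ)^9 < Real.exp (16/9) ^ 9 := by
      have he : Real.exp (16/9) ^ 9 = Real.exp 16 := by
        rw [← Real.exp_nat_mul]; norm_num
      rw [he, show (16:ℝ) = (16:ℕ) * 1 by norm_num, Real.exp_nat_mul]
      have hd := Real.exp_one_gt_d9
      calc (5.82844:ℝ)^9 < 2.7182818283^16 := by norm_num
        _ ≤ Real.exp 1 ^ 16 := pow_le_pow_left₀ (by norm_num) hd.le 16
    exact lt_of_pow_lt_pow_left₀ 9 (Real.exp_pos _).le h9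
  have hL : Real.log (3 + 2 * Real.sqrt 2) < 16/9 := by
    rw [Real.log_lt_iff_lt_exp (by nlinarith [Real.sqrt_nonneg 2])]
    nlinarith
  have hL0 : (0:ℝ) < Real.log (3 + 2 * Real.sqrt 2) := by
    apply Real.log_pos; nlinarith [Real.sqrt_nonneg 2]
  nlinarith [Real.pi_gt_d6]

/-- `θ = arctan(π / log(3+2√2))` satisfies `θ ≠ π/3`; equivalently
`√3 · log(3+2√2) ≠ π`. Moreover `θ > π/3`. -/
theorem theta_ne_pi_div_three :
    Real.arctan (Real.pi / Real.log (3 + 2 * Real.sqrt 2)) ≠ Real.pi / 3 ∧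
    Real.sqrt 3 * Real.log (3 + 2 * Real.sqrt 2) ≠ Real.pi ∧
    Real.pi / 3 < Real.arctan (Real.pi / Real.log (3 + 2 * Real.sqrt 2)) := by
  have hL : (0:ℝ) < Real.log (3 + 2 * Real.sqrt 2) := by
    apply Real.log_pos
    nlinarith [Real.sqrt_nonneg 2]
  have hk := key
  have h3 : Real.sqrt 3 < Real.pi / Real.log (3 + 2 * Real.sqrt 2) := by
    rw [lt_div_iff₀ hL]; exact hk
  have hlt : Real.pi / 3 < Real.arctan (Real.pi / Real.log (3 + 2 * Real.sqrt 2)) := by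
    have := Real.arctan_strictMono h3
    rwa [show Real.arctan (Real.sqrt 3) = Real.pi / 3 by
      rw [← Real.tan_pi_div_three]
      exact Real.arctan_tan (by linarith [Real.pi_pos]) (by linarith [Real.pi_pos])] at this
  exact ⟨hlt.ne', hk.ne, hlt⟩
end
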